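/- arXiv:1508.05039 — 3 statements merged into one kernel-verified Lean document; each statement's English description precedes it below -/
import Mathlib

section
/- Let f : (0,∞) → (0,∞) be continuous with Φ(x) = ∫₁^x ds/f(s) satisfying Φ(0⁺) = −∞ and Φ(+∞) = +∞. Let x : [0,β) → (0,∞) be a C¹ solution of ẋ(t) = −f(x(t)) + u(t) with u(t) ≥ 0 for all t. Then for all t ∈ [0,β): x(t) ≥ Φ⁻¹(Φ(x(0)) − t) > 0. -/
/-!
Along a solution, `d/dt Φ(x(t)) = ẋ/f(x) = -1 + u/f(x) ≥ -1`, so `Φ(x(t)) ≥ Φ(x(0)) - t`.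
Since `Φ` is strictly increasing on `(0,∞)` with inverse `Ψ`, this is `x(t) ≥ Ψ(Φ(x(0)) - t)`.
-/

open Set

theorem Convex.mul_sub_le_image_sub_of_hasDerivAt_ge {D : Set ℝ} (hD : Convex ℝ D)
    {f f' : ℝ → ℝ} {C : ℝ} (hf : ∀ x ∈ D, HasDerivAt f (f' x) x) (hC : ∀ x ∈ D, C ≤ f' x) :
    ∀ x ∈ D, ∀ y ∈ D, x ≤ y → C * (y - x) ≤ f y - f x := by
  have hint : ∀ x ∈ interior D, x ∈ D := fun _ hx => interior_subset hx
  refine hD.mul_sub_le_image_sub_of_le_deriv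
    (fun x hx => (hf x hx).continuousAt.continuousWithinAt)
    (fun x hx => (hf x (hint x hx)).differentiableAt.differentiableWithinAt) fun x hx => ?_
  rw [(hf x (hint x hx)).deriv]
  exact hC x (hint x hx)

section PrimitiveOnIoi

variable {g Φ : ℝ → ℝ} {c : ℝ}

theorem hasDerivAt_of_eq_integral_of_continuousOn_Ioi (hg : ContinuousOn g (Ioi 0))
    (hc : 0 < c) (hΦ : ∀ x : ℝ, 0 < x → Φ x = ∫ s in c..x, g s) {y : ℝ} (hy : 0 < y) :
    HasDerivAt Φ (g y) y := by
  have hcy : IntervalIntegrable g MeasureTheory.volume c y :=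
    (hg.mono fun z hz => (lt_min hc hy).trans_le hz.1).intervalIntegrable
  have hprim : HasDerivAt (fun z => ∫ s in c..z, g s) (g y) y :=
    intervalIntegral.integral_hasDerivAt_right hcy
      (hg.stronglyMeasurableAtFilter isOpen_Ioi y hy) ((hg y hy).continuousAt (Ioi_mem_nhds hy))
  exact hprim.congr_of_eventuallyEq (Filter.eventuallyEq_of_mem (Ioi_mem_nhds hy) hΦ)

theorem strictMonoOn_of_eq_integral_of_pos (hg : ContinuousOn g (Ioi 0))
    (hgpos : ∀ x : ℝ, 0 < x → 0 < g x) (hc : 0 < c)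
    (hΦ : ∀ x : ℝ, 0 < x → Φ x = ∫ s in c..x, g s) :
    StrictMonoOn Φ (Ioi 0) := by
  have hderiv : ∀ y ∈ Ioi (0 : ℝ), HasDerivAt Φ (g y) y := fun _ hy =>
    hasDerivAt_of_eq_integral_of_continuousOn_Ioi hg hc hΦ hy
  refine strictMonoOn_of_hasDerivWithinAt_pos (convex_Ioi 0)
    (fun y hy => (hderiv y hy).continuousAt.continuousWithinAt) (fun y hy => ?_)
    (fun y hy => hgpos y (interior_subset hy))
  exact (hderiv y (interior_subset hy)).hasDerivWithinAt

end PrimitiveOnIoi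

theorem neg_one_le_one_div_mul_neg_add {a b : ℝ} (ha : 0 < a) (hb : 0 ≤ b) :
    -1 ≤ 1 / a * (-a + b) := by
  rw [one_div_mul_eq_div, neg_add_eq_sub, sub_div, div_self ha.ne']
  linarith [div_nonneg hb ha.le]

theorem solution_positivity_general
    (f : ℝ → ℝ) (hfc : ContinuousOn f (Set.Ioi 0))
    (hfpos : ∀ x : ℝ, 0 < x → 0 < f x)
    (Φ Ψ : ℝ → ℝ) (hΦ : ∀ x : ℝ, 0 < x → Φ x = ∫ s in (1:ℝ)..x, 1 / f s)
    -- Ψ is the inverse Φ⁻¹ : ℝ → (0,∞) of the strictly increasing bijection Φ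
    (hΨpos : ∀ y : ℝ, 0 < Ψ y)
    (hΦΨ : ∀ y : ℝ, Φ (Ψ y) = y)
    (β : ℝ)
    (x u : ℝ → ℝ)
    (hxpos : ∀ t ∈ Set.Ico (0:ℝ) β, 0 < x t)
    (hu : ∀ t ∈ Set.Ico (0:ℝ) β, 0 ≤ u t)
    (hsol : ∀ t ∈ Set.Ico (0:ℝ) β, HasDerivAt x (-(f (x t)) + u t) t) :
    ∀ t ∈ Set.Ico (0:ℝ) β, x t ≥ Ψ (Φ (x 0) - t) ∧ 0 < Ψ (Φ (x 0) - t) := by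
  intro t ht
  have hinv : ContinuousOn (fun s => 1 / f s) (Ioi 0) :=
    continuousOn_const.div hfc fun s hs => (hfpos s hs).ne'
  have hΦx : ∀ s ∈ Ico 0 β, HasDerivAt (Φ ∘ x) (1 / f (x s) * (-(f (x s)) + u s)) s :=
    fun s hs => (hasDerivAt_of_eq_integral_of_continuousOn_Ioi hinv one_pos hΦ
      (hxpos s hs)).comp s (hsol s hs)
  have hdecay : -1 * (t - 0) ≤ Φ (x t) - Φ (x 0) :=
    (convex_Ico 0 β).mul_sub_le_image_sub_of_hasDerivAt_ge hΦx
      (fun s hs => neg_one_le_one_div_mul_neg_add (hfpos _ (hxpos s hs)) (hu s hs))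
      0 ⟨le_rfl, ht.1.trans_lt ht.2⟩ t ht ht.1
  have hmono : StrictMonoOn Φ (Ioi 0) :=
    strictMonoOn_of_eq_integral_of_pos hinv (fun s hs => one_div_pos.2 (hfpos s hs)) one_pos hΦ
  refine ⟨?_, hΨpos _⟩
  rw [ge_iff_le, ← hmono.le_iff_le (hΨpos _) (hxpos t ht), hΦΨ]
  linarith

/-- Positivity of solutions: with nonnegative input, the solution of ẋ = −f(x)+u
stays above Φ⁻¹(Φ(x(0)) − t) > 0. -/
theorem solution_positivity
    (f : ℝ → ℝ) (hfc : ContinuousOn f (Set.Ioi 0))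
    (hfpos : ∀ x : ℝ, 0 < x → 0 < f x)
    (Φ Ψ : ℝ → ℝ) (hΦ : ∀ x : ℝ, 0 < x → Φ x = ∫ s in (1:ℝ)..x, 1 / f s)
    -- Ψ is the inverse Φ⁻¹ : ℝ → (0,∞) of the strictly increasing bijection Φ
    (hΨpos : ∀ y : ℝ, 0 < Ψ y) (hΨΦ : ∀ x : ℝ, 0 < x → Ψ (Φ x) = x)
    (hΦΨ : ∀ y : ℝ, Φ (Ψ y) = y)
    (β : ℝ) (hβ : 0 < β)
    (x u : ℝ → ℝ)
    (hxpos : ∀ t ∈ Set.Ico (0:ℝ) β, 0 < x t)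
    (hu : ∀ t ∈ Set.Ico (0:ℝ) β, 0 ≤ u t)
    (hsol : ∀ t ∈ Set.Ico (0:ℝ) β, HasDerivAt x (-(f (x t)) + u t) t) :
    ∀ t ∈ Set.Ico (0:ℝ) β, x t ≥ Ψ (Φ (x 0) - t) ∧ 0 < Ψ (Φ (x 0) - t) :=
  solution_positivity_general f hfc hfpos Φ Ψ hΦ hΨpos hΦΨ β x u hxpos hu hsol
end

section
/- Let f : (0,∞) → (0,∞) be continuous and strictly increasing, and let x : [0,∞) → (0,∞) be a C¹ solution of ẋ = −f(x) + u with u(t) > 0. If μ := limsup_{t→∞} u(t) < sup_{x>0} f(x), then limsup_{t→∞} x(t) ≤ f⁻¹(μ), where f⁻¹ is the inverse of f on its range. -/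
open Filter

/-- Ultimate bound: if μ = limsup u < sup f, then limsup x ≤ f⁻¹(μ). The value
f⁻¹(μ) is given as the point ξ > 0 with f ξ = μ (inverse of f on its range). -/
theorem ultimate_bound
    (f : ℝ → ℝ) (hfc : ContinuousOn f (Set.Ioi 0))
    (hfpos : ∀ s : ℝ, 0 < s → 0 < f s)
    (hfmono : StrictMonoOn f (Set.Ioi 0))
    (x u : ℝ → ℝ) (μ : ℝ)
    (hxpos : ∀ t : ℝ, 0 ≤ t → 0 < x t)
    (hupos : ∀ t : ℝ, 0 ≤ t → 0 < u t)
    (hsol : ∀ t : ℝ, 0 ≤ t → HasDerivAt x (-(f (x t)) + u t) t)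
    (hubdd : IsBoundedUnder (· ≤ ·) atTop u)
    (hμ : limsup u atTop = μ)
    (hμsup : ∃ s : ℝ, 0 < s ∧ μ < f s)  -- μ < sup_{x>0} f(x)
    -- f⁻¹ is defined at μ:
    (ξ : ℝ) (hξ : 0 < ξ) (hfξ : f ξ = μ) :
    limsup x atTop ≤ ξ := by
  have hcob : IsCoboundedUnder (· ≤ ·) atTop x := by
    refine IsBoundedUnder.isCoboundedUnder_le ⟨0, eventually_map.2 ?_⟩
    filter_upwards [eventually_ge_atTop (0:ℝ)] with t ht
    exact (hxpos t ht).le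
  refine le_of_forall_gt_imp_ge_of_dense fun b hb => ?_
  have hb0 : (0:ℝ) < b := hξ.trans hb
  have hfb : μ < f b := by
    rw [← hfξ]; exact hfmono (Set.mem_Ioi.2 hξ) (Set.mem_Ioi.2 hb0) hb
  set ε := (f b - μ)/2 with hε
  have hεpos : 0 < ε := by simp only [hε]; linarith
  have hue : ∀ᶠ t in atTop, u t < μ + ε := by
    apply eventually_lt_of_limsup_lt _ hubdd
    rw [hμ]; linarith
  obtain ⟨T₀, hT₀⟩ := eventually_atTop.1 hue
  set T := max T₀ 0 with hTdef
  have hT0 : (0:ℝ) ≤ T := le_max_right _ _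
  have hu' : ∀ t, T ≤ t → u t < μ + ε := fun t ht =>
    hT₀ t (le_trans (le_max_left _ _) ht)
  -- key decay estimate
  have key : ∀ s t : ℝ, T ≤ s → s ≤ t → (∀ r, s < r → r < t → b ≤ x r) →
      x t + ε * t ≤ x s + ε * s := by
    intro s t hs hst hr
    have hanti : AntitoneOn (fun r => x r + ε * r) (Set.Icc s t) := by
      have hnn : ∀ r ∈ Set.Icc s t, (0:ℝ) ≤ r := fun r hrr =>
        le_trans hT0 (hs.trans hrr.1)
      have hd : ∀ r ∈ Set.Icc s t,
          HasDerivAt (fun r => x r + ε * r) (-(f (x r)) + u r + ε) r := by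
        intro r hrr
        exact (hsol r (hnn r hrr)).add ((hasDerivAt_id r).const_mul ε |>.congr_deriv
          (by ring))
      apply antitoneOn_of_deriv_nonpos (convex_Icc s t)
      · exact fun r hrr => ((hd r hrr).continuousAt).continuousWithinAt
      · intro r hrr
        rw [interior_Icc] at hrr
        exact ((hd r ⟨hrr.1.le, hrr.2.le⟩).differentiableAt).differentiableWithinAt
      · intro r hrr
        rw [interior_Icc] at hrr
        have hder := (hd r ⟨hrr.1.le, hrr.2.le⟩).deriv
        rw [hder]
        have hxr : b ≤ x r := hr r (lt_of_le_of_lt hs hrr.1 |>.trans_le (le_refl r) |> fun _ => hrr.1) hrr.2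
        have hfxr : f b ≤ f (x r) := by
          rcases eq_or_lt_of_le hxr with h | h
          · rw [← h]
          · exact (hfmono (Set.mem_Ioi.2 hb0) (Set.mem_Ioi.2 (hb0.trans h)) h).le
        have hur : u r < μ + ε := hu' r (hs.trans hrr.1.le)
        have : f b = μ + 2 * ε := by simp only [hε]; ring
        linarith
    have hm : x t + ε * t ≤ x s + ε * s :=
      hanti (Set.left_mem_Icc.2 hst) (Set.right_mem_Icc.2 hst) hst
    exact hm
  -- existence of a time where x ≤ b
  have hex : ∃ s, T ≤ s ∧ x s ≤ b := by
    by_contra h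
    push_neg at h
    obtain ⟨t, htdef⟩ : ∃ t, t = T + (x T + 1) / ε := ⟨_, rfl⟩
    have hTt : T ≤ t := by
      have : 0 ≤ (x T + 1) / ε := div_nonneg (by linarith [hxpos T hT0]) hεpos.le
      linarith
    have hkey := key T t le_rfl hTt fun r hr₁ hr₂ => (h r hr₁.le).le
    have hxt : 0 < x t := hxpos t (hT0.trans hTt)
    have : ε * t = ε * T + (x T + 1) := by
      rw [htdef]; field_simp
    linarith
  obtain ⟨s₀, hs₀T, hs₀⟩ := hex
  -- once below b, stays below b
  have stay : ∀ t, s₀ ≤ t → x t ≤ b := by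
    intro t ht
    by_contra hxt
    push_neg at hxt
    set S := Set.Icc s₀ t ∩ x ⁻¹' Set.Iic b with hSdef
    have hxcont : ContinuousOn x (Set.Icc s₀ t) := fun r hrr =>
      ((hsol r (le_trans (hT0.trans hs₀T) hrr.1)).continuousAt).continuousWithinAt
    have hSclosed : IsClosed S :=
      hxcont.preimage_isClosed_of_isClosed isClosed_Icc isClosed_Iic
    have hSne : S.Nonempty := ⟨s₀, ⟨le_rfl, ht⟩, hs₀⟩
    have hSbdd : BddAbove S := ⟨t, fun r hr => hr.1.2⟩
    set s' := sSup S with hs'def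
    have hs'S : s' ∈ S := hSclosed.csSup_mem hSne hSbdd
    have hs'₁ : s₀ ≤ s' := hs'S.1.1
    have hs'₂ : s' ≤ t := hs'S.1.2
    have hs'x : x s' ≤ b := hs'S.2
    have hmid : ∀ r, s' < r → r < t → b ≤ x r := by
      intro r hr₁ hr₂
      by_contra hc
      push_neg at hc
      have : r ∈ S := ⟨⟨hs'₁.trans hr₁.le, hr₂.le⟩, hc.le⟩
      exact absurd (le_csSup hSbdd this) (not_le.2 hr₁)
    have hkey := key s' t (hs₀T.trans hs'₁) hs'₂ hmid
    nlinarith [mul_le_mul_of_nonneg_left hs'₂ hεpos.le]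
  refine limsup_le_of_le hcob ?_
  filter_upwards [eventually_ge_atTop s₀] with t ht using stay t ht
end

section
/- Consider a cascade of two blocks: ẋ₁ = −f₁(x₁) + u(t), ẋ₂ = −f₂(x₂) + g₁(x₁(t)), with x₁(t), x₂(t) > 0, where f₁, f₂ : (0,∞) → (0,∞) are continuous strictly increasing, g₁ : (0,∞) → (0,∞) is continuous strictly increasing, and u(t) > 0. Suppose limsup_{t→∞} u(t) ≤ M, f₁⁻¹ is defined at M (i.e. M < sup f₁), and f₂⁻¹ is defined at g₁(f₁⁻¹(M)). Then limsup_{t→∞} x₁(t) ≤ f₁⁻¹(M) and limsup_{t→∞} x₂(t) ≤ f₂⁻¹(g₁(f₁⁻¹(M))). -/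
open Filter Topology

/-- Mean value decrease: if x' ≤ -δ on [a,c] then x c ≤ x a - δ(c-a). -/
lemma decrease_aux (x d : ℝ → ℝ) (a c δ : ℝ) (hac : a ≤ c)
    (hd : ∀ t ∈ Set.Icc a c, HasDerivAt x (d t) t)
    (hle : ∀ t ∈ Set.Icc a c, d t ≤ -δ) : x c ≤ x a - δ * (c - a) := by
  set y : ℝ → ℝ := fun s => x s + δ * s with hy
  have hy' : ∀ t ∈ Set.Icc a c, HasDerivAt y (d t + δ) t := by
    intro t ht
    have h2 : HasDerivAt (fun s => δ * s) δ t := by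
      simpa using (hasDerivAt_id t).const_mul δ
    exact (hd t ht).add h2
  have hanti : AntitoneOn y (Set.Icc a c) := by
    apply antitoneOn_of_deriv_nonpos (convex_Icc a c)
    · intro t ht
      exact (hy' t ht).continuousAt.continuousWithinAt
    · intro t ht
      rw [interior_Icc] at ht
      exact ((hy' t ⟨ht.1.le, ht.2.le⟩).differentiableAt).differentiableWithinAt
    · intro t ht
      rw [interior_Icc] at ht
      have := (hy' t ⟨ht.1.le, ht.2.le⟩).deriv
      rw [this]
      have := hle t ⟨ht.1.le, ht.2.le⟩
      linarith
  have := hanti (Set.left_mem_Icc.2 hac) (Set.right_mem_Icc.2 hac) hac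
  simp only [hy] at this
  linarith

/-- Key single-block lemma: eventual bound on the state. -/
lemma key_block (f x u : ℝ → ℝ)
    (hfmono : StrictMonoOn f (Set.Ioi 0))
    (hxpos : ∀ t : ℝ, 0 ≤ t → 0 < x t)
    (hsol : ∀ t : ℝ, 0 ≤ t → HasDerivAt x (-(f (x t)) + u t) t)
    (M ξ : ℝ) (hξ : 0 < ξ) (hfξ : f ξ = M)
    (hu : ∀ c, M < c → ∀ᶠ t in atTop, u t < c) :
    ∀ ε > 0, ∀ᶠ t in atTop, x t ≤ ξ + ε := by
  intro ε hε
  set b := ξ + ε with hbdef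
  have hb : 0 < b := by positivity
  have hfb : M < f b := by
    rw [← hfξ]
    exact hfmono (Set.mem_Ioi.2 hξ) (Set.mem_Ioi.2 hb) (by linarith)
  set c := (M + f b) / 2 with hcdef
  have hMc : M < c := by simp only [hcdef]; linarith
  have hcfb : c < f b := by simp only [hcdef]; linarith
  set δ := f b - c with hδdef
  have hδ : 0 < δ := by simp only [hδdef]; linarith
  obtain ⟨T₀, hT₀⟩ := eventually_atTop.1 (hu c hMc)
  set T := max T₀ 0 with hTdef
  have hT0 : (0:ℝ) ≤ T := le_max_right _ _
  have hTu : ∀ t, T ≤ t → u t < c := fun t ht => hT₀ t ((le_max_left _ _).trans ht)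
  -- Claim A
  have claimA : ∀ a c', T ≤ a → a ≤ c' → (∀ t ∈ Set.Icc a c', b ≤ x t) →
      x c' ≤ x a - δ * (c' - a) := by
    intro a c' hTa hac' hxb
    apply decrease_aux x (fun t => -(f (x t)) + u t) a c' δ hac'
    · intro t ht
      exact hsol t (hT0.trans (hTa.trans ht.1))
    · intro t ht
      have hxt : b ≤ x t := hxb t ht
      have hfxt : f b ≤ f (x t) := by
        rcases eq_or_lt_of_le hxt with h | h
        · rw [← h]
        · exact (hfmono (Set.mem_Ioi.2 hb) (Set.mem_Ioi.2 (hb.trans_le hxt)) h).le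
      have hut : u t < c := hTu t (hTa.trans ht.1)
      simp only [hδdef]; linarith
  -- Claim B : some point below b
  have claimB : ∃ t₀, T ≤ t₀ ∧ x t₀ ≤ b := by
    by_contra h
    push_neg at h
    set t₁ := T + (x T - b) / δ + 1 with ht₁def
    have hxT : b < x T := h T le_rfl
    have hTt₁ : T ≤ t₁ := by
      have : 0 ≤ (x T - b) / δ := div_nonneg (by linarith) hδ.le
      simp only [ht₁def]; linarith
    have := claimA T t₁ le_rfl hTt₁ (fun t ht => (h t ht.1).le)
    have hxt₁ : b < x t₁ := h t₁ hTt₁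
    have hdiv : δ * ((x T - b) / δ) = x T - b := by
      field_simp
    simp only [ht₁def] at this
    rw [show T + (x T - b) / δ + 1 - T = (x T - b) / δ + 1 by ring,
      mul_add, hdiv, mul_one] at this
    linarith
  obtain ⟨t₀, hTt₀, hxt₀⟩ := claimB
  have ht₀0 : (0:ℝ) ≤ t₀ := hT0.trans hTt₀
  -- Invariance: for all t ≥ t₀, x t ≤ b
  filter_upwards [eventually_ge_atTop t₀] with t₁ ht₁
  by_contra hgt
  push_neg at hgt
  have ht01 : t₀ < t₁ := by
    rcases eq_or_lt_of_le ht₁ with h | h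
    · exact absurd (h ▸ hxt₀) (not_le.2 hgt)
    · exact h
  set S := {s | s ∈ Set.Icc t₀ t₁ ∧ x s ≤ b} with hSdef
  have hne : t₀ ∈ S := ⟨Set.left_mem_Icc.2 ht₁, hxt₀⟩
  have hbdd : BddAbove S := ⟨t₁, fun s hs => hs.1.2⟩
  set s₀ := sSup S with hs₀def
  have hs₀mem : s₀ ∈ Set.Icc t₀ t₁ :=
    ⟨le_csSup hbdd hne, csSup_le ⟨t₀, hne⟩ fun s hs => hs.1.2⟩
  have hs₀0 : (0:ℝ) ≤ s₀ := ht₀0.trans hs₀mem.1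
  have hcontxs₀ : ContinuousAt x s₀ := (hsol s₀ hs₀0).differentiableAt.continuousAt
  have hcl : s₀ ∈ closure S := (isLUB_csSup ⟨t₀, hne⟩ hbdd).mem_closure ⟨t₀, hne⟩
  have hxs₀le : x s₀ ≤ b := by
    have hnb : (𝓝[S] s₀).NeBot := mem_closure_iff_nhdsWithin_neBot.1 hcl
    refine le_of_tendsto (hcontxs₀.continuousWithinAt : Tendsto x (𝓝[S] s₀) (𝓝 (x s₀))) ?_
    filter_upwards [self_mem_nhdsWithin] with s hs
    exact hs.2
  have hgt' : ∀ t, s₀ < t → t ≤ t₁ → b < x t := by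
    intro t hst ht
    by_contra h
    push_neg at h
    have htS : t ∈ S := ⟨⟨hs₀mem.1.trans hst.le, ht⟩, h⟩
    exact absurd (le_csSup hbdd htS) (not_le.2 hst)
  have hs₀lt : s₀ < t₁ := by
    rcases eq_or_lt_of_le hs₀mem.2 with h | h
    · exact absurd (h ▸ hxs₀le) (not_le.2 hgt)
    · exact h
  have hxs₀ge : b ≤ x s₀ := by
    refine ge_of_tendsto (hcontxs₀.continuousWithinAt : Tendsto x (𝓝[>] s₀) (𝓝 (x s₀))) ?_
    filter_upwards [Ioc_mem_nhdsGT_of_mem ⟨le_rfl, hs₀lt⟩] with t ht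
    exact (hgt' t ht.1 ht.2).le
  have hIcc : ∀ t ∈ Set.Icc s₀ t₁, b ≤ x t := by
    intro t ht
    rcases eq_or_lt_of_le ht.1 with h | h
    · rw [← h]; exact hxs₀ge
    · exact (hgt' t h ht.2).le
  have hAB := claimA s₀ t₁ (hTt₀.trans hs₀mem.1) hs₀mem.2 hIcc
  nlinarith [hAB, hδ, hs₀lt]

/-- Two-block cascade: ultimate bounds propagate, limsup x₁ ≤ f₁⁻¹(M) and
limsup x₂ ≤ f₂⁻¹(g₁(f₁⁻¹(M))). The inverse values are the points ξ₁, ξ₂. -/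
theorem cascade_ultimate_bounds
    (f₁ f₂ g₁ : ℝ → ℝ)
    (hf₁c : ContinuousOn f₁ (Set.Ioi 0)) (hf₂c : ContinuousOn f₂ (Set.Ioi 0))
    (hg₁c : ContinuousOn g₁ (Set.Ioi 0))
    (hf₁pos : ∀ s : ℝ, 0 < s → 0 < f₁ s) (hf₂pos : ∀ s : ℝ, 0 < s → 0 < f₂ s)
    (hg₁pos : ∀ s : ℝ, 0 < s → 0 < g₁ s)
    (hf₁mono : StrictMonoOn f₁ (Set.Ioi 0)) (hf₂mono : StrictMonoOn f₂ (Set.Ioi 0))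
    (hg₁mono : StrictMonoOn g₁ (Set.Ioi 0))
    (x₁ x₂ u : ℝ → ℝ) (M : ℝ)
    (hx₁pos : ∀ t : ℝ, 0 ≤ t → 0 < x₁ t) (hx₂pos : ∀ t : ℝ, 0 ≤ t → 0 < x₂ t)
    (hupos : ∀ t : ℝ, 0 ≤ t → 0 < u t)
    (hsol₁ : ∀ t : ℝ, 0 ≤ t → HasDerivAt x₁ (-(f₁ (x₁ t)) + u t) t)
    (hsol₂ : ∀ t : ℝ, 0 ≤ t → HasDerivAt x₂ (-(f₂ (x₂ t)) + g₁ (x₁ t)) t)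
    (hubdd : IsBoundedUnder (· ≤ ·) atTop u)
    (hulimsup : limsup u atTop ≤ M)
    -- f₁⁻¹ is defined at M (M < sup f₁), and f₂⁻¹ is defined at g₁(f₁⁻¹(M)):
    (ξ₁ : ℝ) (hξ₁ : 0 < ξ₁) (hfξ₁ : f₁ ξ₁ = M)
    (ξ₂ : ℝ) (hξ₂ : 0 < ξ₂) (hfξ₂ : f₂ ξ₂ = g₁ ξ₁)
    (hM₁ : ∃ s : ℝ, 0 < s ∧ M < f₁ s)
    (hM₂ : ∃ s : ℝ, 0 < s ∧ g₁ ξ₁ < f₂ s) :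
    limsup x₁ atTop ≤ ξ₁ ∧ limsup x₂ atTop ≤ ξ₂ := by
  have hu₁ : ∀ c, M < c → ∀ᶠ t in atTop, u t < c := fun c hc =>
    eventually_lt_of_limsup_lt (lt_of_le_of_lt hulimsup hc) hubdd
  have hkey₁ := key_block f₁ x₁ u hf₁mono hx₁pos hsol₁ M ξ₁ hξ₁ hfξ₁ hu₁
  -- limsup bound helper
  have hlimsup : ∀ (x : ℝ → ℝ) (ξ : ℝ), (∀ t : ℝ, 0 ≤ t → 0 < x t) →
      (∀ ε > 0, ∀ᶠ t in atTop, x t ≤ ξ + ε) → limsup x atTop ≤ ξ := by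
    intro x ξ hxpos hev
    have hcob : IsCoboundedUnder (· ≤ ·) atTop x := by
      apply isCoboundedUnder_le_of_eventually_le atTop (x := 0)
      filter_upwards [eventually_ge_atTop (0:ℝ)] with t ht
      exact (hxpos t ht).le
    refine le_of_forall_gt_imp_ge_of_dense fun c hc => ?_
    have := hev (c - ξ) (by linarith)
    refine limsup_le_of_le hcob ?_
    filter_upwards [this] with t ht
    linarith
  have hlim₁ : limsup x₁ atTop ≤ ξ₁ := hlimsup x₁ ξ₁ hx₁pos hkey₁
  -- g₁ ∘ x₁ eventual bound
  have hg₁cont : ContinuousAt g₁ ξ₁ := hg₁c.continuousAt (Ioi_mem_nhds hξ₁)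
  have hu₂ : ∀ c, g₁ ξ₁ < c → ∀ᶠ t in atTop, g₁ (x₁ t) < c := by
    intro c hc
    have hev : ∀ᶠ y in nhds ξ₁, g₁ y < c :=
      hg₁cont.eventually_lt (continuousAt_const) hc
    obtain ⟨ε, hε, hball⟩ := Metric.eventually_nhds_iff.1 hev
    have hy₀ : g₁ (ξ₁ + ε / 2) < c := by
      apply hball
      rw [Real.dist_eq, abs_of_pos (by linarith : (0:ℝ) < ξ₁ + ε / 2 - ξ₁)]
      linarith
    filter_upwards [hkey₁ (ε / 2) (by linarith), eventually_ge_atTop (0:ℝ)] with t ht ht0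
    calc g₁ (x₁ t) ≤ g₁ (ξ₁ + ε / 2) := by
          rcases eq_or_lt_of_le ht with h | h
          · rw [h]
          · exact (hg₁mono (Set.mem_Ioi.2 (hx₁pos t ht0))
              (Set.mem_Ioi.2 (by linarith)) h).le
      _ < c := hy₀
  have hkey₂ := key_block f₂ x₂ (fun t => g₁ (x₁ t)) hf₂mono hx₂pos hsol₂
    (g₁ ξ₁) ξ₂ hξ₂ hfξ₂ hu₂
  exact ⟨hlim₁, hlimsup x₂ ξ₂ hx₂pos hkey₂⟩
end
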